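/- arXiv:math/0209354 — 2 statements merged into one kernel-verified Lean document; each statement's English description precedes it below -/
import Mathlib

section
/- A subset A ⊆ {1,…,2n} is a cocircuit (bond) of the Catalan matroid C_n if and only if (i) maxht_A = 1, and (ii) whenever ht_A(x) = 1 for some 0 ≤ x ≤ 2n, the set A contains no elements greater than x. -/
/-- Height of the path with up-step set `A` after `x` steps: `2·|A ∩ {1,…,x}| − x`. -/
def ht (A : Finset ℕ) (x : ℕ) : ℤ := 2 * (A ∩ Finset.Icc 1 x).card - x

/-- `P` is the up-step set of a Dyck path of length `2n`. -/
def IsDyck (n : ℕ) (P : Finset ℕ) : Prop :=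
  P ⊆ Finset.Icc 1 (2 * n) ∧ P.card = n ∧ ∀ x ≤ 2 * n, 0 ≤ ht P x

/-- Maximum height of the path `A` over `0 ≤ x ≤ 2n`. -/
def maxht (n : ℕ) (A : Finset ℕ) : ℤ :=
  ((Finset.range (2 * n + 1)).image (ht A)).max' (by simp)

/-- `A` is independent in the dual of the Catalan matroid: it is contained in the
complement of some basis. -/
def CatalanCoindep (n : ℕ) (A : Finset ℕ) : Prop :=
  ∃ B : Finset ℕ, IsDyck n B ∧ A ⊆ Finset.Icc 1 (2 * n) \ B

/-- `A` is a cocircuit (bond) of the Catalan matroid: a circuit of the dual matroid,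
i.e. a minimal subset of the ground set not contained in the complement of any basis. -/
def IsCatalanCocircuit (n : ℕ) (A : Finset ℕ) : Prop :=
  A ⊆ Finset.Icc 1 (2 * n) ∧ ¬ CatalanCoindep n A ∧ ∀ A' ⊂ A, CatalanCoindep n A'

/-!
A subset `A` of the ground set is coindependent (avoided by some Dyck path) iff its height
never becomes positive: if `A` avoids the Dyck path `B` then `ht_A ≤ ht_{[1,2n] \ B} = -ht_B ≤ 0`,
and conversely the first `n` elements of the complement of `A` form a Dyck path. Erasing `a` from
`A` lowers `ht_A(x)` by `2` when `a ≤ x` and leaves it unchanged when `x < a`. Hence `A` is a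
minimal dependent set iff its height reaches `1` but never `2` (the up-step at which it first
reaches `2` could be erased), and no element of `A` lies beyond a point of height `1`.
-/

open Finset

lemma exists_eq_of_le_of_succ_le_add_one {f : ℕ → ℕ} (hf : ∀ k, f (k + 1) ≤ f k + 1)
    {c x : ℕ} (h0 : f 0 ≤ c) (hx : c ≤ f x) : ∃ m ≤ x, f m = c := by
  induction x with
  | zero => exact ⟨0, le_rfl, le_antisymm h0 hx⟩
  | succ x ih =>
    by_cases hc : c ≤ f x
    · obtain ⟨m, hm, rfl⟩ := ih hc
      exact ⟨m, by omega, rfl⟩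
    · exact ⟨x + 1, le_rfl, by have := hf x; omega⟩

lemma card_inter_Icc_succ (S : Finset ℕ) (x : ℕ) :
    (S ∩ Icc 1 (x + 1)).card = (S ∩ Icc 1 x).card + if x + 1 ∈ S then 1 else 0 := by
  rw [← insert_Icc_right_eq_Icc_add_one (by omega)]
  split_ifs with h
  · rw [inter_insert_of_mem h, card_insert_of_notMem (by simp)]
  · rw [inter_insert_of_notMem h, add_zero]

section Height

variable {A : Finset ℕ}

lemma ht_zero (A : Finset ℕ) : ht A 0 = 0 := by simp [ht]

lemma ht_succ (A : Finset ℕ) (x : ℕ) :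
    ht A (x + 1) = ht A x + if x + 1 ∈ A then 1 else -1 := by
  simp only [ht, card_inter_Icc_succ]
  split_ifs <;> push_cast <;> ring

lemma ht_mono {B : Finset ℕ} (h : A ⊆ B) (x : ℕ) : ht A x ≤ ht B x := by
  have := card_le_card (inter_subset_inter_right h : A ∩ Icc 1 x ⊆ B ∩ Icc 1 x)
  simp only [ht]
  omega

lemma ht_of_subset_Icc {x : ℕ} (h : A ⊆ Icc 1 x) : ht A x = 2 * A.card - x := by
  rw [ht, inter_eq_left.2 h]

lemma ht_inter_Icc_of_le {m x : ℕ} (hxm : x ≤ m) : ht (A ∩ Icc 1 m) x = ht A x := by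
  rw [ht, ht, inter_assoc, inter_eq_right.2 (Icc_subset_Icc_right hxm)]

lemma ht_Icc_sdiff (A : Finset ℕ) {N x : ℕ} (hx : x ≤ N) : ht (Icc 1 N \ A) x = -ht A x := by
  have hsdiff : (Icc 1 N \ A) ∩ Icc 1 x = Icc 1 x \ (A ∩ Icc 1 x) := by
    ext y
    simp only [mem_inter, mem_sdiff, mem_Icc]
    constructor
    · rintro ⟨⟨-, hyA⟩, hy⟩
      exact ⟨hy, fun h => hyA h.1⟩
    · rintro ⟨hy, hyA⟩
      exact ⟨⟨⟨hy.1, hy.2.trans hx⟩, fun h => hyA ⟨h, hy⟩⟩, hy⟩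
  have hle := card_le_card (inter_subset_right : A ∩ Icc 1 x ⊆ Icc 1 x)
  rw [Nat.card_Icc] at hle
  rw [ht, ht, hsdiff, card_sdiff_of_subset inter_subset_right, Nat.card_Icc]
  omega

lemma ht_erase_of_lt (A : Finset ℕ) {a x : ℕ} (hxa : x < a) : ht (A.erase a) x = ht A x := by
  rw [ht, ht, erase_inter, erase_eq_of_notMem (by simp; omega)]

lemma ht_erase_of_le {a x : ℕ} (ha : a ∈ A) (ha₁ : 1 ≤ a) (hax : a ≤ x) :
    ht (A.erase a) x = ht A x - 2 := by
  have hmem : a ∈ A ∩ Icc 1 x := mem_inter.2 ⟨ha, mem_Icc.2 ⟨ha₁, hax⟩⟩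
  have hpos := card_pos.2 ⟨a, hmem⟩
  rw [ht, ht, erase_inter, card_erase_of_mem hmem]
  push_cast [hpos]
  ring

lemma exists_up_step_of_two_le_ht {x : ℕ} (hx : 2 ≤ ht A x) :
    ∃ y < x, ht A y = 1 ∧ y + 1 ∈ A := by
  induction x with
  | zero => simp [ht_zero] at hx
  | succ x ih =>
    by_cases h : 2 ≤ ht A x
    · obtain ⟨y, hyx, hy⟩ := ih h
      exact ⟨y, by omega, hy⟩
    · rw [ht_succ] at hx
      split_ifs at hx with hA
      · exact ⟨x, by omega, by omega, hA⟩
      · omega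

lemma ht_le_one_of_forall_ht_erase_nonpos {N : ℕ}
    (h : ∀ a ∈ A, ∀ x ≤ N, ht (A.erase a) x ≤ 0) : ∀ x ≤ N, ht A x ≤ 1 := by
  intro x hx
  by_contra! hx₂
  obtain ⟨y, hyx, hy, hyA⟩ := exists_up_step_of_two_le_ht (show 2 ≤ ht A x by omega)
  have := h _ hyA y (by omega)
  rw [ht_erase_of_lt A (by omega)] at this
  omega

end Height

section Maxht

variable {n : ℕ} {A : Finset ℕ}

lemma maxht_le_iff {c : ℤ} : maxht n A ≤ c ↔ ∀ x ≤ 2 * n, ht A x ≤ c := by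
  simp [maxht, max'_le_iff]

lemma exists_ht_eq_maxht (n : ℕ) (A : Finset ℕ) : ∃ x ≤ 2 * n, ht A x = maxht n A := by
  obtain ⟨x, hx, hxeq⟩ := mem_image.1 (max'_mem ((range (2 * n + 1)).image (ht A)) (by simp))
  exact ⟨x, Nat.lt_succ_iff.1 (mem_range.1 hx), hxeq⟩

lemma maxht_eq_iff {c : ℤ} :
    maxht n A = c ↔ (∀ x ≤ 2 * n, ht A x ≤ c) ∧ ∃ x ≤ 2 * n, ht A x = c := by
  constructor
  · rintro rfl
    exact ⟨maxht_le_iff.1 le_rfl, exists_ht_eq_maxht n A⟩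
  · rintro ⟨hle, x, hx, rfl⟩
    exact le_antisymm (maxht_le_iff.2 hle) (maxht_le_iff.1 le_rfl x hx)

end Maxht

section Coindep

variable {n : ℕ} {A : Finset ℕ}

lemma CatalanCoindep.mono {A' : Finset ℕ} (h : CatalanCoindep n A) (hsub : A' ⊆ A) :
    CatalanCoindep n A' :=
  let ⟨B, hB, hAB⟩ := h
  ⟨B, hB, hsub.trans hAB⟩

lemma CatalanCoindep.ht_nonpos (hA : CatalanCoindep n A) : ∀ x ≤ 2 * n, ht A x ≤ 0 := by
  obtain ⟨B, ⟨-, -, hB⟩, hAB⟩ := hA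
  intro x hx
  have := ht_mono hAB x
  rw [ht_Icc_sdiff B hx] at this
  linarith [hB x hx]

lemma catalanCoindep_of_ht_nonpos (hA : A ⊆ Icc 1 (2 * n)) (h : ∀ x ≤ 2 * n, ht A x ≤ 0) :
    CatalanCoindep n A := by
  set C := Icc 1 (2 * n) \ A
  have hC : ∀ x ≤ 2 * n, ht C x = -ht A x := fun x hx => ht_Icc_sdiff A hx
  obtain ⟨m, -, hm⟩ : ∃ m ≤ 2 * n, (C ∩ Icc 1 m).card = n := by
    refine exists_eq_of_le_of_succ_le_add_one (f := fun m => (C ∩ Icc 1 m).card)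
      (fun k => by simp only [card_inter_Icc_succ]; split_ifs <;> omega) (by simp) ?_
    have h₁ := hC (2 * n) le_rfl
    have h₂ := h (2 * n) le_rfl
    simp only [ht] at h₁ h₂ ⊢
    omega
  refine ⟨C ∩ Icc 1 m, ⟨inter_subset_left.trans sdiff_subset, hm, fun x hx => ?_⟩,
    fun a ha => mem_sdiff.2 ⟨hA ha, fun h => (mem_sdiff.1 (mem_inter.1 h).1).2 ha⟩⟩
  rcases le_total x m with hxm | hmx
  · rw [ht_inter_Icc_of_le hxm, hC x hx]
    linarith [h x hx]
  · rw [ht_of_subset_Icc (inter_subset_right.trans (Icc_subset_Icc_right hmx)), hm]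
    omega

lemma catalanCoindep_iff (hA : A ⊆ Icc 1 (2 * n)) :
    CatalanCoindep n A ↔ ∀ x ≤ 2 * n, ht A x ≤ 0 :=
  ⟨CatalanCoindep.ht_nonpos, catalanCoindep_of_ht_nonpos hA⟩

lemma isCatalanCocircuit_iff_erase (hA : A ⊆ Icc 1 (2 * n)) :
    IsCatalanCocircuit n A ↔ ¬CatalanCoindep n A ∧ ∀ a ∈ A, CatalanCoindep n (A.erase a) := by
  refine ⟨fun ⟨_, hdep, hmin⟩ => ⟨hdep, fun a ha => hmin _ (erase_ssubset ha)⟩,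
    fun ⟨hdep, herase⟩ => ⟨hA, hdep, fun A' hA' => ?_⟩⟩
  obtain ⟨a, haA, haA'⟩ := exists_of_ssubset hA'
  exact (herase a haA).mono (subset_erase.2 ⟨hA'.subset, haA'⟩)

end Coindep

theorem catalan_cocircuits_general (n : ℕ) (A : Finset ℕ)
    (hA : A ⊆ Finset.Icc 1 (2 * n)) :
    IsCatalanCocircuit n A ↔
      (maxht n A = 1 ∧ ∀ x ≤ 2 * n, ht A x = 1 → ∀ a ∈ A, a ≤ x) := by
  simp only [isCatalanCocircuit_iff_erase hA, catalanCoindep_iff hA,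
    catalanCoindep_iff ((erase_subset _ _).trans hA), maxht_eq_iff]
  push Not
  constructor
  · rintro ⟨⟨x₀, hx₀, hpos⟩, herase⟩
    have hle := ht_le_one_of_forall_ht_erase_nonpos herase
    refine ⟨⟨hle, x₀, hx₀, by linarith [hle x₀ hx₀]⟩, fun x hx hx₁ a ha => ?_⟩
    by_contra! hxa
    have := herase a ha x hx
    rw [ht_erase_of_lt A hxa] at this
    omega
  · rintro ⟨⟨hle, x₀, hx₀, hx₀₁⟩, hlast⟩
    refine ⟨⟨x₀, hx₀, by omega⟩, fun a ha x hx => ?_⟩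
    rcases le_or_gt a x with hax | hxa
    · rw [ht_erase_of_le ha (mem_Icc.1 (hA ha)).1 hax]
      linarith [hle x hx]
    · rw [ht_erase_of_lt A hxa]
      have hx₁ : ht A x ≠ 1 := fun h => (hlast x hx h a ha).not_gt hxa
      have := hle x hx
      omega

/-- The cocircuits (bonds) of the Catalan matroid are the subsets `A` of the ground set
with (i) `maxht_A = 1` and (ii) whenever `ht_A(x) = 1`, `A` has no elements `> x`. -/
theorem catalan_cocircuits (n : ℕ) (hn : 0 < n) (A : Finset ℕ)
    (hA : A ⊆ Finset.Icc 1 (2 * n)) :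
    IsCatalanCocircuit n A ↔
      (maxht n A = 1 ∧ ∀ x ≤ 2 * n, ht A x = 1 → ∀ a ∈ A, a ≤ x) :=
  catalan_cocircuits_general n A hA
end

section
/- Fix the linear order 1 < 2 < ⋯ < 2n on the ground set of the Catalan matroid C_n. For any basis B of C_n, the external activity e(B) (the number of elements e ∉ B such that e is the smallest element of the unique circuit contained in B ∪ {e}) equals b(B), the number of x ∈ {1,…,2n} with ht_B(x) = 0. -/
/-- `A` is independent in the Catalan matroid: it is contained in some basis. -/
def CatalanIndep (n : ℕ) (A : Finset ℕ) : Prop :=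
  ∃ B : Finset ℕ, IsDyck n B ∧ A ⊆ B

/-- A circuit of the Catalan matroid: a minimal dependent subset of the ground set. -/
def IsCatalanCircuit (n : ℕ) (A : Finset ℕ) : Prop :=
  A ⊆ Finset.Icc 1 (2 * n) ∧ ¬ CatalanIndep n A ∧ ∀ A' ⊂ A, CatalanIndep n A'

/-- `e` is externally active with respect to the basis `B` (for the order
`1 < 2 < ⋯ < 2n`): `e` is in the ground set but not in `B`, and `e` is the smallest
element of the unique circuit contained in `B ∪ {e}`. -/
def ExternallyActive (n : ℕ) (B : Finset ℕ) (e : ℕ) : Prop :=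
  e ∈ Finset.Icc 1 (2 * n) ∧ e ∉ B ∧ ∃ C : Finset ℕ, IsCatalanCircuit n C ∧
    C ⊆ insert e B ∧ e ∈ C ∧ ∀ c ∈ C, e ≤ c


/-!
A set `A ⊆ {1,…,2n}` extends to a Dyck path iff after every position `x` at most half of
the remaining `2n - x` steps lie in `A`; such a set is completed by adding, one at a time,
the smallest missing element. Let `B` be a Dyck path. A circuit in `B ∪ {e}` with minimum `e`
lies inside `F = {e} ∪ {b ∈ B | e < b}`, and `F` violates the bound at `e - 1` exactly when
the path is at height `0` at `e`. In that case `F` itself is that circuit; otherwise `F` and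
all its subsets are independent.
-/

open Finset

def SuffixBounded (n : ℕ) (A : Finset ℕ) : Prop :=
  ∀ x ≤ 2 * n, 2 * #{a ∈ A | x < a} + x ≤ 2 * n

lemma card_inter_Icc_add_card_filter_lt {A : Finset ℕ} (h0 : 0 ∉ A) (x : ℕ) :
    #(A ∩ Icc 1 x) + #{a ∈ A | x < a} = #A := by
  have hlow : A ∩ Icc 1 x = {a ∈ A | ¬ x < a} := by
    ext a
    simp only [mem_inter, mem_Icc, mem_filter, not_lt, and_congr_right_iff]
    intro ha
    have : a ≠ 0 := fun h => h0 (h ▸ ha)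
    omega
  rw [hlow, add_comm]
  exact card_filter_add_card_filter_not _

lemma ht_eq_of_zero_notMem {A : Finset ℕ} (h0 : 0 ∉ A) (x : ℕ) :
    ht A x = 2 * (#A : ℤ) - x - 2 * #{a ∈ A | x < a} := by
  have := card_inter_Icc_add_card_filter_lt h0 x
  unfold ht
  omega

lemma zero_notMem_of_subset_Icc {A : Finset ℕ} {m : ℕ} (hA : A ⊆ Icc 1 m) : 0 ∉ A :=
  fun h => by simpa using hA h

lemma isDyck_iff {n : ℕ} {B : Finset ℕ} :
    IsDyck n B ↔ B ⊆ Icc 1 (2 * n) ∧ #B = n ∧ SuffixBounded n B := by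
  refine and_congr_right fun hB => and_congr_right fun hcard => forall₂_congr fun x _ => ?_
  rw [ht_eq_of_zero_notMem (zero_notMem_of_subset_Icc hB), hcard]
  omega

namespace SuffixBounded

variable {n : ℕ} {A S : Finset ℕ}

lemma anti (h : SuffixBounded n A) (hSA : S ⊆ A) : SuffixBounded n S := fun x hx =>
  le_trans (by gcongr) (h x hx)

lemma card_le (h : SuffixBounded n A) (h0 : 0 ∉ A) : #A ≤ n := by
  have := h 0 (Nat.zero_le _)
  rw [filter_true_of_mem fun a ha => Nat.pos_of_ne_zero fun h => h0 (h ▸ ha)] at this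
  omega

lemma insert_min' (hA : A ⊆ Icc 1 (2 * n)) (h : SuffixBounded n A) (hcard : #A < n)
    (hne : (Icc 1 (2 * n) \ A).Nonempty) :
    SuffixBounded n (insert ((Icc 1 (2 * n) \ A).min' hne) A) := by
  set e := (Icc 1 (2 * n) \ A).min' hne
  have he : e ∈ Icc 1 (2 * n) \ A := min'_mem _ hne
  simp only [mem_sdiff, mem_Icc] at he
  intro x hx
  by_cases hxe : x < e
  · have hprefix : Icc 1 x ⊆ insert e A ∩ Icc 1 x := fun y hy => by
      have hy' := mem_Icc.mp hy
      refine mem_inter.mpr ⟨mem_insert_of_mem ?_, hy⟩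
      by_contra hyA
      have := min'_le (Icc 1 (2 * n) \ A) y
        (mem_sdiff.mpr ⟨mem_Icc.mpr ⟨hy'.1, by omega⟩, hyA⟩)
      omega
    have hsplit := card_inter_Icc_add_card_filter_lt
      (zero_notMem_of_subset_Icc (insert_subset (mem_Icc.mpr he.1) hA)) x
    have := card_le_card hprefix
    rw [card_insert_of_notMem he.2] at hsplit
    rw [Nat.card_Icc] at this
    omega
  · rw [filter_insert, if_neg hxe]
    exact h x hx

end SuffixBounded

lemma exists_isDyck_superset {n : ℕ} {A : Finset ℕ} (hA : A ⊆ Icc 1 (2 * n))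
    (h : SuffixBounded n A) : ∃ B, IsDyck n B ∧ A ⊆ B := by
  induction hk : n - #A generalizing A with
  | zero =>
    have := h.card_le (zero_notMem_of_subset_Icc hA)
    exact ⟨A, isDyck_iff.mpr ⟨hA, by omega, h⟩, subset_rfl⟩
  | succ k ih =>
    have hne : (Icc 1 (2 * n) \ A).Nonempty := by
      rw [← card_pos, card_sdiff_of_subset hA, Nat.card_Icc]
      omega
    have he := min'_mem _ hne
    rw [mem_sdiff] at he
    obtain ⟨B, hB, hAB⟩ := ih (insert_subset he.1 hA) (h.insert_min' hA (by omega) hne)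
      (by rw [card_insert_of_notMem he.2]; omega)
    exact ⟨B, hB, (subset_insert _ _).trans hAB⟩

lemma catalanIndep_iff {n : ℕ} {A : Finset ℕ} :
    CatalanIndep n A ↔ A ⊆ Icc 1 (2 * n) ∧ SuffixBounded n A := by
  constructor
  · rintro ⟨B, hB, hAB⟩
    obtain ⟨hBsub, -, hBsuf⟩ := isDyck_iff.mp hB
    exact ⟨hAB.trans hBsub, hBsuf.anti hAB⟩
  · rintro ⟨hA, h⟩
    exact exists_isDyck_superset hA h

section FundamentalCircuit

variable {n : ℕ} {B S : Finset ℕ} {e : ℕ}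

lemma card_insert_filter_lt : #(insert e {b ∈ B | e < b}) = #{b ∈ B | e < b} + 1 :=
  card_insert_of_notMem fun h => (mem_filter.mp h).2.false

lemma subset_insert_filter_lt_of_subset_insert (hS : S ⊆ insert e B)
    (hmin : ∀ s ∈ S, e ≤ s) :
    S ⊆ insert e {b ∈ B | e < b} := fun s hs => by
  rcases mem_insert.mp (hS hs) with rfl | hsB
  · exact mem_insert_self _ _
  · by_cases hse : s = e
    · exact hse ▸ mem_insert_self _ _
    · exact mem_insert_of_mem (mem_filter.mpr ⟨hsB, lt_of_le_of_ne (hmin s hs) (Ne.symm hse)⟩)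

lemma suffixBounded_of_subset_insert_filter_lt (hB : SuffixBounded n B)
    (hS : S ⊆ insert e {b ∈ B | e < b}) (hcard : 2 * #S + e ≤ 2 * n + 1) :
    SuffixBounded n S := by
  intro x hx
  by_cases hxe : x < e
  · have := card_le_card (filter_subset (x < ·) S)
    omega
  · have hsub : {a ∈ S | x < a} ⊆ {b ∈ B | x < b} := fun a ha => by
      rw [mem_filter] at ha ⊢
      rcases mem_insert.mp (hS ha.1) with rfl | haB
      · omega
      · exact ⟨(mem_filter.mp haB).1, ha.2⟩
    have := card_le_card hsub
    have := hB x hx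
    omega

lemma not_suffixBounded_of_insert_filter_lt_subset (he : 1 ≤ e)
    (hbal : 2 * #{b ∈ B | e < b} + e = 2 * n) (hS : insert e {b ∈ B | e < b} ⊆ S) :
    ¬ SuffixBounded n S := fun h => by
  have hsub : insert e {b ∈ B | e < b} ⊆ {a ∈ S | e - 1 < a} := insert_subset
    (mem_filter.mpr ⟨hS (mem_insert_self _ _), by omega⟩)
    fun b hb => mem_filter.mpr
      ⟨hS (mem_insert_of_mem hb), by have := (mem_filter.mp hb).2; omega⟩
  have := card_le_card hsub
  rw [card_insert_filter_lt] at this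
  have := h (e - 1) (by omega)
  omega

end FundamentalCircuit

lemma IsDyck.ht_eq {n : ℕ} {B : Finset ℕ} (hB : IsDyck n B) (x : ℕ) :
    ht B x = 2 * (n : ℤ) - x - 2 * #{b ∈ B | x < b} := by
  rw [ht_eq_of_zero_notMem (zero_notMem_of_subset_Icc hB.1), hB.2.1]

lemma ExternallyActive.ht_eq_zero {n : ℕ} {B : Finset ℕ} {e : ℕ} (hB : IsDyck n B)
    (h : ExternallyActive n B e) : ht B e = 0 := by
  obtain ⟨he, -, C, ⟨-, hCdep, -⟩, hCB, -, hmin⟩ := h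
  obtain ⟨hBsub, -, hBsuf⟩ := isDyck_iff.mp hB
  have he' := mem_Icc.mp he
  have hCF := subset_insert_filter_lt_of_subset_insert hCB hmin
  have hCsub : C ⊆ Icc 1 (2 * n) := hCF.trans (insert_subset he ((filter_subset _ _).trans hBsub))
  have hCcard := card_le_card hCF
  rw [card_insert_filter_lt] at hCcard
  have := hBsuf e he'.2
  have := hB.ht_eq e
  by_contra hne
  exact hCdep (catalanIndep_iff.mpr
    ⟨hCsub, suffixBounded_of_subset_insert_filter_lt hBsuf hCF (by omega)⟩)

lemma externallyActive_of_ht_eq_zero {n : ℕ} {B : Finset ℕ} {e : ℕ} (hB : IsDyck n B)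
    (he : e ∈ Icc 1 (2 * n)) (h : ht B e = 0) : ExternallyActive n B e := by
  obtain ⟨hBsub, -, hBsuf⟩ := isDyck_iff.mp hB
  have he' := mem_Icc.mp he
  have hbal : 2 * #{b ∈ B | e < b} + e = 2 * n := by have := hB.ht_eq e; omega
  have heB : e ∉ B := fun heB => not_suffixBounded_of_insert_filter_lt_subset he'.1 hbal
    (insert_subset heB (filter_subset _ _)) hBsuf
  have hFsub : insert e {b ∈ B | e < b} ⊆ Icc 1 (2 * n) :=
    insert_subset he ((filter_subset _ _).trans hBsub)
  refine ⟨he, heB, insert e {b ∈ B | e < b}, ⟨hFsub, ?_, ?_⟩,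
    insert_subset_insert _ (filter_subset _ _), mem_insert_self _ _, ?_⟩
  · exact fun hF => not_suffixBounded_of_insert_filter_lt_subset he'.1 hbal subset_rfl
      (catalanIndep_iff.mp hF).2
  · intro A hA
    have := card_lt_card hA
    rw [card_insert_filter_lt] at this
    exact catalanIndep_iff.mpr ⟨hA.subset.trans hFsub,
      suffixBounded_of_subset_insert_filter_lt hBsuf hA.subset (by omega)⟩
  · intro c hc
    rcases mem_insert.mp hc with rfl | hc
    · exact le_rfl
    · exact (mem_filter.mp hc).2.le

theorem catalan_external_activity_general (n : ℕ) (B : Finset ℕ) (hB : IsDyck n B) :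
    {e : ℕ | ExternallyActive n B e}.ncard =
      ((Finset.Icc 1 (2 * n)).filter (fun x => ht B x = 0)).card := by
  rw [← Set.ncard_coe_finset]
  congr 1
  ext e
  simp only [Set.mem_ofPred_eq, coe_filter]
  exact ⟨fun h => ⟨h.1, h.ht_eq_zero hB⟩,
    fun h => externallyActive_of_ht_eq_zero hB h.1 h.2⟩

/-- For any basis `B` of the Catalan matroid, the external activity of `B` equals the
number of `x ∈ {1,…,2n}` with `ht_B(x) = 0`. -/
theorem catalan_external_activity (n : ℕ) (hn : 0 < n) (B : Finset ℕ) (hB : IsDyck n B) :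
    {e : ℕ | ExternallyActive n B e}.ncard =
      ((Finset.Icc 1 (2 * n)).filter (fun x => ht B x = 0)).card :=
  catalan_external_activity_general n B hB
end
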